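/- arXiv:2012.00969 — 6 statements merged into one kernel-verified Lean document; each statement's English description precedes it below -/
import Mathlib

section
/- Let α > 1 and c > 0 be real numbers, and suppose m ≥ 0 and q̃ > 0 satisfy the fixed-point relation q̃ = α·c/(1 + c·m) together with the bound m ≤ 1/(1 + q̃). Then c·m ≤ 1/(α − 1), and moreover m < 1/q̃. -/
/-- If `α > 1`, `c > 0`, `m ≥ 0`, `q̃ > 0` satisfy the fixed-point
relation `q̃ = α·c/(1 + c·m)` and the bound `m ≤ 1/(1 + q̃)`, then
`c·m ≤ 1/(α − 1)` and `m < 1/q̃`. -/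
theorem stmt_1 (α c m qx : ℝ) (hα : 1 < α) (hc : 0 < c) (hm : 0 ≤ m) (hq : 0 < qx)
    (hfix : qx = α * c / (1 + c * m)) (hbound : m ≤ 1 / (1 + qx)) :
    c * m ≤ 1 / (α - 1) ∧ m < 1 / qx := by
  have hden : (0:ℝ) < 1 + c * m := by positivity
  have hq1 : (0:ℝ) < 1 + qx := by linarith
  have hfix' : qx * (1 + c * m) = α * c := by
    field_simp at hfix; linarith [hfix]
  have hb : m * (1 + qx) ≤ 1 := by
    have h := mul_le_mul_of_nonneg_right hbound hq1.le
    rwa [one_div_mul_cancel hq1.ne'] at h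
  constructor
  · rw [le_div_iff₀ (by linarith : (0:ℝ) < α - 1)]
    nlinarith [mul_le_mul_of_nonneg_right hb hc.le, sq_nonneg (c*m), mul_nonneg hc.le hm]
  · have : m < 1 / qx := by
      have h1 : 1 / (1 + qx) < 1 / qx := by
        apply one_div_lt_one_div_of_lt hq; linarith
      linarith
    exact this
end

section
/- Let λ ≥ 0. Let X be a random variable uniform on {−1, +1}, let N be a standard Gaussian random variable independent of X, and set Y = √λ·X + N. Then E[(X − E[X | Y])²] ≤ 4·Q(√λ), where Q(t) = ∫_t^∞ (1/√(2π))·e^{−z²/2} dz is the standard Gaussian tail function. -/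
/-!
The conditional expectation `E[X | Y]` is the orthogonal projection of `X` onto the
square-integrable `σ(Y)`-measurable functions, so its mean-square error is at most that of any `σ(Y)`-measurable
estimator, in particular of the hard decision `sign Y`. Since `N` is independent of `X`,
`E f(X, N) = (E f(-1, N) + E f(1, N)) / 2`. The hard decision errs exactly when `X = -1, N > √λ` or
`X = 1, N ≤ -√λ`, both of Gaussian probability `Q(√λ)`, and each error costs `4`; so its
mean-square error is exactly `4 Q(√λ)`.
-/

open MeasureTheory ProbabilityTheory

/-- The standard Gaussian tail function `Q(t) = ∫_t^∞ (1/√(2π)) e^{−z²/2} dz`. -/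
noncomputable def gaussQ (t : ℝ) : ℝ :=
  ∫ z in Set.Ioi t, (1 / Real.sqrt (2 * Real.pi)) * Real.exp (-z ^ 2 / 2)

section MMSE

variable {Ω : Type*} {m m₀ : MeasurableSpace Ω} {μ : Measure Ω} [IsFiniteMeasure μ]
  {X W Z : Ω → ℝ}

theorem integral_mul_sub_condExp_eq_zero (hm : m ≤ m₀) (hX : MemLp X 2 μ) (hW : MemLp W 2 μ)
    (hWm : StronglyMeasurable[m] W) : ∫ ω, W ω * (X ω - (μ[X | m]) ω) ∂μ = 0 := by
  have hWX : Integrable (fun ω => W ω * X ω) μ := hW.integrable_mul hX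
  have hWC : Integrable (fun ω => W ω * (μ[X | m]) ω) μ :=
    hW.integrable_mul (hX.condExp one_le_two)
  have hpull : μ[W * X | m] =ᵐ[μ] W * μ[X | m] :=
    condExp_mul_of_stronglyMeasurable_left hWm hWX (hX.integrable one_le_two)
  simp_rw [mul_sub]
  rw [integral_sub hWX hWC, ← integral_condExp hm]
  exact sub_eq_zero.mpr (integral_congr_ae hpull)

theorem integral_sq_sub_condExp_le (hm : m ≤ m₀) (hX : MemLp X 2 μ) (hZ : MemLp Z 2 μ)
    (hZm : StronglyMeasurable[m] Z) :
    ∫ ω, (X ω - (μ[X | m]) ω) ^ 2 ∂μ ≤ ∫ ω, (X ω - Z ω) ^ 2 ∂μ := by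
  set C := μ[X | m]
  have hC : MemLp C 2 μ := hX.condExp one_le_two
  have hW : MemLp (C - Z) 2 μ := hC.sub hZ
  have hmain : Integrable (fun ω => (X ω - C ω) ^ 2) μ := (hX.sub hC).integrable_sq
  have hcross : Integrable (fun ω => 2 * ((C - Z) ω * (X ω - C ω))) μ :=
    (hW.integrable_mul (hX.sub hC)).const_mul 2
  have hsum : Integrable (fun ω => (X ω - C ω) ^ 2 + 2 * ((C - Z) ω * (X ω - C ω))) μ :=
    hmain.add hcross
  have hpythagoras : ∫ ω, (X ω - Z ω) ^ 2 ∂μ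
      = ∫ ω, (X ω - C ω) ^ 2 ∂μ + ∫ ω, (C - Z) ω ^ 2 ∂μ :=
    calc ∫ ω, (X ω - Z ω) ^ 2 ∂μ
        = ∫ ω, ((X ω - C ω) ^ 2 + 2 * ((C - Z) ω * (X ω - C ω))) + (C - Z) ω ^ 2 ∂μ := by
          congr 1; ext ω; simp only [Pi.sub_apply]; ring
      _ = _ := by
        rw [integral_add hsum hW.integrable_sq, integral_add hmain hcross, integral_const_mul,
          integral_mul_sub_condExp_eq_zero hm hX hW (stronglyMeasurable_condExp.sub hZm)]
        ring
  rw [hpythagoras]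
  exact le_add_of_nonneg_right (integral_nonneg fun ω => sq_nonneg _)

end MMSE

theorem ProbabilityTheory.IndepFun.integral_comp_of_map_eq_half_dirac_add_half_dirac {Ω β : Type*}
    [MeasurableSpace Ω] [MeasurableSpace β] {μ : Measure Ω} [IsFiniteMeasure μ]
    {X : Ω → ℝ} {N : Ω → β} (hX : Measurable X) (hN : Measurable N) (hindep : IndepFun X N μ)
    {a b : ℝ}
    (hXlaw : μ.map X = (1 / 2 : ENNReal) • Measure.dirac a + (1 / 2 : ENNReal) • Measure.dirac b)
    {g : ℝ → β → ℝ} (hg : Measurable (Function.uncurry g))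
    (hgi : Integrable (fun ω => g (X ω) (N ω)) μ) :
    ∫ ω, g (X ω) (N ω) ∂μ = (∫ n, g a n ∂(μ.map N) + ∫ n, g b n ∂(μ.map N)) / 2 := by
  have hpair : μ.map (fun ω => (X ω, N ω)) = (μ.map X).prod (μ.map N) :=
    (indepFun_iff_map_prod_eq_prod_map_map hX.aemeasurable hN.aemeasurable).mp hindep
  have hint : Integrable (Function.uncurry g) ((μ.map X).prod (μ.map N)) := by
    rw [← hpair]
    exact (integrable_map_measure hg.aestronglyMeasurable (hX.prodMk hN).aemeasurable).mpr hgi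
  calc ∫ ω, g (X ω) (N ω) ∂μ = ∫ p, Function.uncurry g p ∂(μ.map (fun ω => (X ω, N ω))) :=
        (integral_map (hX.prodMk hN).aemeasurable hg.aestronglyMeasurable).symm
    _ = ∫ x, ∫ n, g x n ∂(μ.map N) ∂(μ.map X) := by rw [hpair, integral_prod _ hint]; rfl
    _ = _ := by
      rw [hXlaw, integral_add_measure, integral_smul_measure, integral_smul_measure,
        integral_dirac, integral_dirac]
      · simp only [one_div, ENNReal.toReal_inv, ENNReal.toReal_ofNat, smul_eq_mul]; ring
      · exact (integrable_dirac enorm_lt_top).smul_measure (by simp)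
      · exact (integrable_dirac enorm_lt_top).smul_measure (by simp)

lemma ae_abs_le_one_of_map_eq_half_dirac_add_half_dirac {Ω : Type*} [MeasurableSpace Ω]
    {μ : Measure Ω} {X : Ω → ℝ} (hX : Measurable X)
    (hXlaw : μ.map X =
      (1 / 2 : ENNReal) • Measure.dirac (-1) + (1 / 2 : ENNReal) • Measure.dirac 1) :
    ∀ᵐ ω ∂μ, |X ω| ≤ 1 := by
  have hlaw : ∀ᵐ x ∂(μ.map X), |x| ≤ 1 := by
    simp [hXlaw, ae_add_measure_iff]
  exact ae_of_ae_map hX.aemeasurable hlaw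

lemma gaussianPDFReal_zero_one (x : ℝ) :
    gaussianPDFReal 0 1 x = 1 / Real.sqrt (2 * Real.pi) * Real.exp (-x ^ 2 / 2) := by
  simp [gaussianPDFReal]

lemma gaussianReal_real_Ioi (t : ℝ) : (gaussianReal 0 1).real (Set.Ioi t) = gaussQ t := by
  rw [measureReal_def, gaussianReal_apply_eq_integral 0 one_ne_zero, ENNReal.toReal_ofReal
    (setIntegral_nonneg measurableSet_Ioi fun x _ => gaussianPDFReal_nonneg _ _ _)]
  simp only [gaussianPDFReal_zero_one, gaussQ]

lemma gaussianReal_real_Iic_neg (t : ℝ) : (gaussianReal 0 1).real (Set.Iic (-t)) = gaussQ t := by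
  rw [measureReal_def, gaussianReal_apply_eq_integral 0 one_ne_zero, ENNReal.toReal_ofReal
    (setIntegral_nonneg measurableSet_Iic fun x _ => gaussianPDFReal_nonneg _ _ _),
    gaussQ, ← integral_comp_neg_Ioi]
  simp only [gaussianPDFReal_zero_one, neg_sq]

noncomputable def hardDecision (y : ℝ) : ℝ := if 0 < y then 1 else -1

@[fun_prop]
lemma measurable_hardDecision : Measurable hardDecision :=
  Measurable.ite measurableSet_Ioi measurable_const measurable_const

lemma abs_hardDecision (y : ℝ) : |hardDecision y| = 1 := by
  unfold hardDecision; split_ifs <;> norm_num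

lemma sq_one_sub_hardDecision (t n : ℝ) :
    (1 - hardDecision (t + n)) ^ 2 = (Set.Iic (-t)).indicator (fun _ => 4) n := by
  unfold hardDecision
  by_cases h : n ≤ -t
  · rw [if_neg (by linarith), Set.indicator_of_mem (Set.mem_Iic.mpr h)]; norm_num
  · rw [if_pos (by linarith), Set.indicator_of_notMem (by simpa using h)]; norm_num

lemma sq_neg_one_sub_hardDecision (t n : ℝ) :
    (-1 - hardDecision (-t + n)) ^ 2 = (Set.Ioi t).indicator (fun _ => 4) n := by
  unfold hardDecision
  by_cases h : t < n
  · rw [if_pos (by linarith), Set.indicator_of_mem (Set.mem_Ioi.mpr h)]; norm_num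
  · rw [if_neg (by linarith), Set.indicator_of_notMem (by simpa using h)]; norm_num

theorem integral_sq_sub_hardDecision {Ω : Type*} [MeasurableSpace Ω] {μ : Measure Ω}
    [IsFiniteMeasure μ] {X N : Ω → ℝ} (hX : Measurable X) (hN : Measurable N)
    (hindep : IndepFun X N μ)
    (hXlaw : μ.map X = (1 / 2 : ENNReal) • Measure.dirac (-1) + (1 / 2 : ENNReal) • Measure.dirac 1)
    (hNlaw : μ.map N = gaussianReal 0 1) (t : ℝ)
    (hi : Integrable (fun ω => (X ω - hardDecision (t * X ω + N ω)) ^ 2) μ) :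
    ∫ ω, (X ω - hardDecision (t * X ω + N ω)) ^ 2 ∂μ = 4 * gaussQ t := by
  rw [hindep.integral_comp_of_map_eq_half_dirac_add_half_dirac hX hN hXlaw
      (g := fun x n => (x - hardDecision (t * x + n)) ^ 2) (by fun_prop) hi, hNlaw]
  simp only [mul_neg_one, mul_one, sq_neg_one_sub_hardDecision, sq_one_sub_hardDecision,
    integral_indicator_const _ measurableSet_Ioi, integral_indicator_const _ measurableSet_Iic,
    gaussianReal_real_Ioi, gaussianReal_real_Iic_neg, smul_eq_mul]
  ring

theorem stmt_3_general {Ω : Type*} [MeasurableSpace Ω] (μ : Measure Ω)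
    [IsProbabilityMeasure μ] (lam : ℝ)
    (X N Y : Ω → ℝ) (hX : Measurable X) (hN : Measurable N)
    (hindep : IndepFun X N μ)
    (hXlaw : μ.map X =
      (1 / 2 : ENNReal) • Measure.dirac (-1 : ℝ) +
        (1 / 2 : ENNReal) • Measure.dirac (1 : ℝ))
    (hNlaw : μ.map N = gaussianReal 0 1)
    (hY : ∀ ω, Y ω = Real.sqrt lam * X ω + N ω) :
    ∫ ω, (X ω - (μ[X | MeasurableSpace.comap Y inferInstance]) ω) ^ 2 ∂μ ≤
      4 * gaussQ (Real.sqrt lam) := by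
  have hYm : Measurable Y := by rw [show Y = _ from funext hY]; fun_prop
  have hZm :
      StronglyMeasurable[MeasurableSpace.comap Y inferInstance] (fun ω => hardDecision (Y ω)) :=
    (measurable_hardDecision.comp (comap_measurable Y)).stronglyMeasurable
  have hXL2 : MemLp X 2 μ := MemLp.of_bound hX.aestronglyMeasurable 1
    (ae_abs_le_one_of_map_eq_half_dirac_add_half_dirac hX hXlaw)
  have hZL2 : MemLp (fun ω => hardDecision (Y ω)) 2 μ := MemLp.of_bound
    (measurable_hardDecision.comp hYm).aestronglyMeasurable 1
    (ae_of_all _ fun ω => (abs_hardDecision (Y ω)).le)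
  calc _ ≤ ∫ ω, (X ω - hardDecision (Y ω)) ^ 2 ∂μ :=
        integral_sq_sub_condExp_le hYm.comap_le hXL2 hZL2 hZm
    _ = 4 * gaussQ (Real.sqrt lam) := by
      simp only [hY] at hZL2 ⊢
      exact integral_sq_sub_hardDecision hX hN hindep hXlaw hNlaw _
        (hXL2.sub hZL2).integrable_sq

/-- Let `λ ≥ 0`, `X` uniform on `{−1, +1}`, `N` a standard
Gaussian independent of `X`, and `Y = √λ·X + N`.  Then the minimum mean-square
error satisfies `E[(X − E[X|Y])²] ≤ 4·Q(√λ)`. -/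
theorem stmt_3 {Ω : Type*} [MeasurableSpace Ω] (μ : Measure Ω)
    [IsProbabilityMeasure μ] (lam : ℝ) (hlam : 0 ≤ lam)
    (X N Y : Ω → ℝ) (hX : Measurable X) (hN : Measurable N)
    (hindep : IndepFun X N μ)
    (hXlaw : μ.map X =
      (1 / 2 : ENNReal) • Measure.dirac (-1 : ℝ) +
        (1 / 2 : ENNReal) • Measure.dirac (1 : ℝ))
    (hNlaw : μ.map N = gaussianReal 0 1)
    (hY : ∀ ω, Y ω = Real.sqrt lam * X ω + N ω) :
    ∫ ω, (X ω - (μ[X | MeasurableSpace.comap Y inferInstance]) ω) ^ 2 ∂μ ≤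
      4 * gaussQ (Real.sqrt lam) :=
  stmt_3_general μ lam X N Y hX hN hindep hXlaw hNlaw hY
end

section
/- Let α > 0, c > 0, and m ∈ [0, 1], and set A = √(c·(1 − m)/(1 + c·m)). Then (α·c/(π·(1 + c·m))) · ∫_ℝ (1/√(2π))·e^{−z²/2} · e^{−A²z²}/Q(A·z) dz ≥ α·c/(π·(1 + c)), where Q(t) = ∫_t^∞ (1/√(2π))·e^{−z²/2} dz is the standard Gaussian tail function. -/
/-!
Since `0 < Q ≤ 1`, the integrand dominates `φ(z) e^{-A²z²}` (`φ = gaussianPDFReal 0 1`), with integral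
`1 / √(1 + 2A²) ≥ 1 / (1 + A²) = (1 + cm) / (1 + c)`. The integrand is integrable because
`Q(t) ≥ φ(|t| + 1)` keeps `e^{-t²} / Q(t)` bounded.
-/

open MeasureTheory

open Real ProbabilityTheory Set

lemma gaussianPDFReal_zero_one_s9 (z : ℝ) :
    gaussianPDFReal 0 1 z = 1 / √(2 * π) * exp (-z ^ 2 / 2) := by
  simp [gaussianPDFReal]

lemma gaussQ_eq_setIntegral_gaussianPDFReal (t : ℝ) :
    gaussQ t = ∫ z in Ioi t, gaussianPDFReal 0 1 z := by
  simp only [gaussQ, gaussianPDFReal_zero_one_s9]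

lemma gaussQ_le_one (t : ℝ) : gaussQ t ≤ 1 := by
  rw [gaussQ_eq_setIntegral_gaussianPDFReal, ← integral_gaussianPDFReal_eq_one 0 one_ne_zero]
  exact setIntegral_le_integral (integrable_gaussianPDFReal 0 1)
    (.of_forall (gaussianPDFReal_nonneg 0 1))

lemma gaussQ_antitone : Antitone gaussQ := by
  intro s t hst
  simp only [gaussQ_eq_setIntegral_gaussianPDFReal]
  exact setIntegral_mono_set (integrable_gaussianPDFReal 0 1).integrableOn
    (.of_forall (gaussianPDFReal_nonneg 0 1)) (.of_forall fun z hz => hst.trans_lt hz)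

lemma gaussianPDFReal_abs_add_one_le_gaussQ (t : ℝ) :
    gaussianPDFReal 0 1 (|t| + 1) ≤ gaussQ t := by
  have hle : ∀ z ∈ Ioc t (t + 1), gaussianPDFReal 0 1 (|t| + 1) ≤ gaussianPDFReal 0 1 z := by
    rintro z ⟨hz₁, hz₂⟩
    have : z ^ 2 ≤ (|t| + 1) ^ 2 :=
      sq_le_sq' (by linarith [neg_abs_le t]) (by linarith [le_abs_self t])
    simp only [gaussianPDFReal_zero_one_s9]
    gcongr
  calc gaussianPDFReal 0 1 (|t| + 1)
      = volume.real (Ioc t (t + 1)) • gaussianPDFReal 0 1 (|t| + 1) := by simp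
    _ ≤ ∫ z in Ioc t (t + 1), gaussianPDFReal 0 1 z :=
        setIntegral_ge_of_const_le measurableSet_Ioc measure_Ioc_lt_top.ne hle
          (integrable_gaussianPDFReal 0 1).integrableOn
    _ ≤ gaussQ t := by
        rw [gaussQ_eq_setIntegral_gaussianPDFReal]
        exact setIntegral_mono_set (integrable_gaussianPDFReal 0 1).integrableOn
          (.of_forall (gaussianPDFReal_nonneg 0 1)) (.of_forall fun z hz => hz.1)

lemma gaussQ_pos (t : ℝ) : 0 < gaussQ t :=
  (gaussianPDFReal_pos 0 1 _ one_ne_zero).trans_le (gaussianPDFReal_abs_add_one_le_gaussQ t)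

lemma exp_neg_sq_div_gaussQ_le (t : ℝ) : exp (-t ^ 2) / gaussQ t ≤ √(2 * π) * exp 1 := by
  rw [div_le_iff₀ (gaussQ_pos t)]
  calc exp (-t ^ 2) ≤ exp (1 + -(|t| + 1) ^ 2 / 2) := by
        gcongr
        -- `(|t| - 1)² ≥ 0`
        nlinarith [sq_abs t, sq_nonneg (|t| - 1)]
    _ = √(2 * π) * exp 1 * gaussianPDFReal 0 1 (|t| + 1) := by
        rw [gaussianPDFReal_zero_one_s9, exp_add]
        field_simp
    _ ≤ √(2 * π) * exp 1 * gaussQ t := by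
        gcongr
        exact gaussianPDFReal_abs_add_one_le_gaussQ t

lemma integrable_gaussian_mul_exp_div_gaussQ (A : ℝ) :
    Integrable fun z : ℝ =>
      1 / √(2 * π) * exp (-z ^ 2 / 2) * exp (-A ^ 2 * z ^ 2) / gaussQ (A * z) := by
  refine ((integrable_gaussianPDFReal 0 1).const_mul (√(2 * π) * exp 1)).mono' ?_
    (.of_forall fun z => ?_)
  · exact (by fun_prop : Measurable fun z : ℝ => 1 / √(2 * π) * exp (-z ^ 2 / 2) *
      exp (-A ^ 2 * z ^ 2)).div (gaussQ_antitone.measurable.comp (measurable_const_mul A))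
      |>.aestronglyMeasurable
  · have hQ := gaussQ_pos (A * z)
    rw [Real.norm_of_nonneg (by positivity), ← gaussianPDFReal_zero_one_s9, mul_div_assoc,
      mul_comm (√(2 * π) * exp 1), show -A ^ 2 * z ^ 2 = -(A * z) ^ 2 by ring]
    gcongr
    · exact gaussianPDFReal_nonneg 0 1 z
    · exact exp_neg_sq_div_gaussQ_le (A * z)

lemma integral_gaussianPDFReal_mul_exp_neg_mul_sq {a : ℝ} (ha : 0 ≤ a) :
    ∫ z, gaussianPDFReal 0 1 z * exp (-a * z ^ 2) = (√(1 + 2 * a))⁻¹ := by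
  have hexp (z : ℝ) : gaussianPDFReal 0 1 z * exp (-a * z ^ 2)
      = 1 / √(2 * π) * exp (-(1 / 2 + a) * z ^ 2) := by
    rw [gaussianPDFReal_zero_one_s9, mul_assoc, ← exp_add]
    ring_nf
  simp only [hexp]
  rw [integral_const_mul, integral_gaussian,
    show π / (1 / 2 + a) = 2 * π / (1 + 2 * a) by field_simp,
    sqrt_div (by positivity)]
  field_simp

lemma inv_one_add_sq_le_integral_gaussian_mul_exp_div_gaussQ (A : ℝ) :
    (1 + A ^ 2)⁻¹ ≤ ∫ z : ℝ,
      1 / √(2 * π) * exp (-z ^ 2 / 2) * exp (-A ^ 2 * z ^ 2) / gaussQ (A * z) := by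
  have hsqrt : √(1 + 2 * A ^ 2) ≤ 1 + A ^ 2 :=
    sqrt_le_iff.2 ⟨by positivity, by nlinarith [sq_nonneg (A ^ 2)]⟩
  calc (1 + A ^ 2)⁻¹ ≤ (√(1 + 2 * A ^ 2))⁻¹ := by gcongr
    _ = ∫ z, gaussianPDFReal 0 1 z * exp (-A ^ 2 * z ^ 2) := by
        rw [integral_gaussianPDFReal_mul_exp_neg_mul_sq (sq_nonneg A)]
    _ ≤ _ := by
        refine integral_mono ?_ (integrable_gaussian_mul_exp_div_gaussQ A) fun z => ?_
        · refine (integrable_gaussianPDFReal 0 1).mul_bdd (c := 1) (by fun_prop)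
            (.of_forall fun z => ?_)
          rw [norm_of_nonneg (exp_nonneg _), exp_le_one_iff]
          nlinarith [sq_nonneg A, sq_nonneg z]
        · rw [← gaussianPDFReal_zero_one_s9]
          exact le_div_self (mul_nonneg (gaussianPDFReal_nonneg 0 1 z) (exp_nonneg _))
            (gaussQ_pos _) (gaussQ_le_one _)

/-- For `α > 0`, `c > 0`, `m ∈ [0,1]` and
`A = √(c(1−m)/(1+c·m))`,
`(α·c/(π(1+c·m))) · ∫_ℝ (1/√(2π)) e^{−z²/2} e^{−A²z²}/Q(Az) dz ≥ α·c/(π(1+c))`. -/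
theorem stmt_9 (α c m : ℝ) (hα : 0 < α) (hc : 0 < c) (hm0 : 0 ≤ m) (hm1 : m ≤ 1) :
    let A : ℝ := Real.sqrt (c * (1 - m) / (1 + c * m))
    α * c / (Real.pi * (1 + c)) ≤
      (α * c / (Real.pi * (1 + c * m))) *
        ∫ z : ℝ, (1 / Real.sqrt (2 * Real.pi)) * Real.exp (-z ^ 2 / 2) *
          Real.exp (-A ^ 2 * z ^ 2) / gaussQ (A * z) := by
  intro A
  have hcm : 0 < 1 + c * m := by positivity
  have hA : 1 + A ^ 2 = (1 + c) / (1 + c * m) := by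
    have h1m : 0 ≤ 1 - m := by linarith
    rw [sq_sqrt (by positivity)]
    field_simp
    ring
  calc α * c / (π * (1 + c)) = α * c / (π * (1 + c * m)) * (1 + A ^ 2)⁻¹ := by
        rw [hA]
        field_simp
    _ ≤ _ := by
        gcongr
        exact inv_one_add_sq_le_integral_gaussian_mul_exp_div_gaussQ A
end

section
/- Let v > 0 and Δ > 0, let W be a Gaussian random variable with mean 0 and variance v, and define the two-bit quantizer g(w) = sign(w)·(1/√10) if |w| < Δ and g(w) = sign(w)·(3/√10) if |w| ≥ Δ. Then E[g(W)·W] = (2/√10)·√(v/(2π))·(1 + 2·e^{−Δ²/(2v)}). If in addition the threshold satisfies P(|W| ≥ Δ) = 1/2 (so that E[g(W)²] = 1/2), then (E[g(W)·W])² / (E[W²]·E[g(W)²]) = (2/(5π))·(1 + 2·e^{−Δ²/(2v)})². -/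
/-! Write `g(w)·w = ℓ₁|w| + (ℓ₂ - ℓ₁)|w|·1{|w| ≥ Δ}` and `g(w)² = ℓ₁² + (ℓ₂² - ℓ₁²)·1{|w| ≥ Δ}`
(for `w ≠ 0`). Everything then reduces to the truncated absolute moment
`E[|W|; |W| ≥ a] = √(2v/π)·e^{-a²/(2v)}`, which by symmetry is `2∫_a^∞ x φ(x) dx` and is
computed from the antiderivative `-v φ` of `x φ(x)`, `φ` the density of `W`. -/

open MeasureTheory ProbabilityTheory Real Set Filter
open scoped NNReal

lemma integral_Ioi_mul_exp_neg_mul_sq {b : ℝ} (hb : 0 < b) (a : ℝ) :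
    ∫ x in Ioi a, x * exp (-b * x ^ 2) = exp (-b * a ^ 2) / (2 * b) := by
  have hderiv (x : ℝ) :
      HasDerivAt (fun x ↦ -(2 * b)⁻¹ * exp (-b * x ^ 2)) (x * exp (-b * x ^ 2)) x := by
    refine ((((hasDerivAt_pow 2 x).const_mul (-b)).exp).const_mul (-(2 * b)⁻¹)).congr_deriv ?_
    field_simp
    ring
  have hlim : Tendsto (fun x : ℝ ↦ -(2 * b)⁻¹ * exp (-b * x ^ 2)) atTop (nhds 0) := by
    simpa using (tendsto_exp_atBot.comp ((tendsto_pow_atTop two_ne_zero).const_mul_atTop_of_neg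
      (neg_lt_zero.2 hb))).const_mul (-(2 * b)⁻¹)
  rw [integral_Ioi_of_hasDerivAt_of_tendsto' (fun x _ ↦ hderiv x)
    (integrable_mul_exp_neg_mul_sq hb).integrableOn hlim]
  field_simp
  ring

lemma integral_indicator_le_abs_mul_exp_neg_mul_sq {b a : ℝ} (hb : 0 < b) (ha : 0 ≤ a) :
    ∫ x, {x | a ≤ |x|}.indicator (fun x ↦ |x| * exp (-b * x ^ 2)) x =
      exp (-b * a ^ 2) / b := by
  have hcomp : (fun x ↦ {x | a ≤ |x|}.indicator (fun x ↦ |x| * exp (-b * x ^ 2)) x) =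
      fun x ↦ (Ici a).indicator (fun y ↦ y * exp (-b * y ^ 2)) |x| := by
    ext x
    simp [indicator_apply, sq_abs]
  rw [hcomp, integral_comp_abs, ← integral_Ici_eq_integral_Ioi,
    integral_indicator measurableSet_Ici, Measure.restrict_restrict measurableSet_Ici,
    Ici_inter_Ici, max_eq_left ha, integral_Ici_eq_integral_Ioi,
    integral_Ioi_mul_exp_neg_mul_sq hb]
  field_simp

lemma integral_indicator_le_abs_gaussianReal {v : ℝ≥0} (hv : v ≠ 0) {a : ℝ} (ha : 0 ≤ a) :
    ∫ x, {x | a ≤ |x|}.indicator (fun x ↦ |x|) x ∂gaussianReal 0 v =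
      √(2 * v / π) * exp (-a ^ 2 / (2 * v)) := by
  have hv' : (0 : ℝ) < v := by positivity
  have hb : 0 < (2 * (v : ℝ))⁻¹ := by positivity
  have hdens (x : ℝ) : gaussianPDFReal 0 v x * {x | a ≤ |x|}.indicator (fun x ↦ |x|) x =
      (√(2 * π * v))⁻¹ *
        {x | a ≤ |x|}.indicator (fun x ↦ |x| * exp (-(2 * (v : ℝ))⁻¹ * x ^ 2)) x := by
    simp only [indicator_apply, gaussianPDFReal, sub_zero]
    split_ifs
    · rw [neg_div, neg_mul, div_eq_inv_mul]; ring
    · simp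
  simp_rw [integral_gaussianReal_eq_integral_smul hv, smul_eq_mul, hdens, integral_const_mul,
    integral_indicator_le_abs_mul_exp_neg_mul_sq hb ha]
  have hsqrt : √(2 * v / π) = 2 * v / √(2 * π * v) := by
    rw [eq_div_iff (by positivity), ← sqrt_mul (by positivity),
      show 2 * v / π * (2 * π * v) = (2 * v : ℝ) ^ 2 by field_simp, sqrt_sq (by positivity)]
  rw [hsqrt, neg_mul, ← div_eq_inv_mul, neg_div]
  field_simp

lemma integral_sq_gaussianReal (v : ℝ≥0) : ∫ x, x ^ 2 ∂gaussianReal 0 v = v := by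
  simpa [variance_eq_integral measurable_id'.aemeasurable, integral_id_gaussianReal]
    using variance_fun_id_gaussianReal (μ := 0) (v := v)

lemma Real.sign_mul_self_eq_abs (r : ℝ) : Real.sign r * r = |r| := by
  rcases lt_trichotomy r 0 with h | rfl | h
  · rw [Real.sign_of_neg h, abs_of_neg h, neg_one_mul]
  · simp
  · rw [Real.sign_of_pos h, abs_of_pos h, one_mul]

lemma Real.sign_sq_of_ne_zero {r : ℝ} (hr : r ≠ 0) : Real.sign r ^ 2 = 1 := by
  rcases Real.sign_apply_eq_of_ne_zero r hr with h | h <;> simp [h]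

noncomputable def twoLevelQuantizer (Δ ℓ₁ ℓ₂ w : ℝ) : ℝ :=
  if |w| < Δ then Real.sign w * ℓ₁ else Real.sign w * ℓ₂

section twoLevelQuantizer

variable (Δ ℓ₁ ℓ₂ : ℝ)

lemma twoLevelQuantizer_mul_self (w : ℝ) :
    twoLevelQuantizer Δ ℓ₁ ℓ₂ w * w =
      ℓ₁ * |w| + (ℓ₂ - ℓ₁) * {x | Δ ≤ |x|}.indicator (fun x ↦ |x|) w := by
  have hsign := Real.sign_mul_self_eq_abs w
  by_cases h : |w| < Δ
  · have hw : w ∉ {x | Δ ≤ |x|} := not_le.2 h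
    rw [twoLevelQuantizer, if_pos h, indicator_of_notMem hw]
    linear_combination ℓ₁ * hsign
  · have hw : w ∈ {x | Δ ≤ |x|} := not_lt.1 h
    rw [twoLevelQuantizer, if_neg h, indicator_of_mem hw]
    linear_combination ℓ₂ * hsign

lemma twoLevelQuantizer_sq_of_ne_zero {w : ℝ} (hw : w ≠ 0) :
    twoLevelQuantizer Δ ℓ₁ ℓ₂ w ^ 2 =
      ℓ₁ ^ 2 + (ℓ₂ ^ 2 - ℓ₁ ^ 2) * {x | Δ ≤ |x|}.indicator 1 w := by
  have hsign := Real.sign_sq_of_ne_zero hw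
  by_cases h : |w| < Δ
  · have hw : w ∉ {x | Δ ≤ |x|} := not_le.2 h
    rw [twoLevelQuantizer, if_pos h, indicator_of_notMem hw]
    linear_combination ℓ₁ ^ 2 * hsign
  · have hw : w ∈ {x | Δ ≤ |x|} := not_lt.1 h
    rw [twoLevelQuantizer, if_neg h, indicator_of_mem hw, Pi.one_apply]
    linear_combination ℓ₂ ^ 2 * hsign

lemma integral_twoLevelQuantizer_mul_gaussianReal {v : ℝ≥0} (hv : v ≠ 0) (hΔ : 0 ≤ Δ) :
    ∫ w, twoLevelQuantizer Δ ℓ₁ ℓ₂ w * w ∂gaussianReal 0 v =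
      √(2 * v / π) * (ℓ₁ + (ℓ₂ - ℓ₁) * exp (-Δ ^ 2 / (2 * v))) := by
  have habs : Integrable (fun x ↦ |x|) (gaussianReal 0 v) :=
    ((memLp_id_gaussianReal 1).integrable le_rfl).abs
  have habs_eq : ∫ x, |x| ∂gaussianReal 0 v = √(2 * v / π) := by
    simpa using integral_indicator_le_abs_gaussianReal hv le_rfl
  simp_rw [twoLevelQuantizer_mul_self]
  rw [integral_add (habs.const_mul _)
      ((habs.indicator (measurableSet_le measurable_const measurable_abs)).const_mul _),
    integral_const_mul, integral_const_mul, habs_eq, integral_indicator_le_abs_gaussianReal hv hΔ]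
  ring

lemma integral_twoLevelQuantizer_sq_gaussianReal {v : ℝ≥0} (hv : v ≠ 0) :
    ∫ w, twoLevelQuantizer Δ ℓ₁ ℓ₂ w ^ 2 ∂gaussianReal 0 v =
      ℓ₁ ^ 2 + (ℓ₂ ^ 2 - ℓ₁ ^ 2) * (gaussianReal 0 v).real {w | Δ ≤ |w|} := by
  have := nullSingletonClass_gaussianReal (μ := 0) hv
  have hS : MeasurableSet {w : ℝ | Δ ≤ |w|} := measurableSet_le measurable_const measurable_abs
  have hae : ∀ᵐ w ∂gaussianReal 0 v, twoLevelQuantizer Δ ℓ₁ ℓ₂ w ^ 2 =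
      ℓ₁ ^ 2 + (ℓ₂ ^ 2 - ℓ₁ ^ 2) * {x | Δ ≤ |x|}.indicator 1 w :=
    (gaussianReal 0 v).ae_ne 0 |>.mono fun _ ↦ twoLevelQuantizer_sq_of_ne_zero Δ ℓ₁ ℓ₂
  rw [integral_congr_ae hae,
    integral_add (integrable_const _) (((integrable_const 1).indicator hS).const_mul _),
    integral_const_mul, integral_indicator_one hS]
  simp

end twoLevelQuantizer

/-- Bussgang gain of the two-bit quantizer with output levels
`±1/√10, ±3/√10` and threshold `Δ`, applied to `W ∼ N(0, v)`:
`E[g(W)·W] = (2/√10)·√(v/(2π))·(1 + 2e^{−Δ²/(2v)})`, and if moreover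
`P(|W| ≥ Δ) = 1/2` (so that `E[g(W)²] = 1/2`), then
`(E[g(W)·W])²/(E[W²]·E[g(W)²]) = (2/(5π))·(1 + 2e^{−Δ²/(2v)})²`. -/
theorem stmt_11 (v : NNReal) (hv : 0 < v) (Δ : ℝ) (hΔ : 0 < Δ) :
    let g : ℝ → ℝ := fun w =>
      if |w| < Δ then Real.sign w * (1 / Real.sqrt 10)
      else Real.sign w * (3 / Real.sqrt 10)
    let μ : Measure ℝ := gaussianReal 0 v
    (∫ w, g w * w ∂μ) =
        (2 / Real.sqrt 10) * Real.sqrt (v / (2 * Real.pi)) *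
          (1 + 2 * Real.exp (-Δ ^ 2 / (2 * v))) ∧
      ((μ {w | Δ ≤ |w|}).toReal = 1 / 2 →
        (∫ w, g w * w ∂μ) ^ 2 / ((∫ w, w ^ 2 ∂μ) * ∫ w, g w ^ 2 ∂μ) =
          (2 / (5 * Real.pi)) * (1 + 2 * Real.exp (-Δ ^ 2 / (2 * v))) ^ 2) := by
  intro g μ
  have hg : g = twoLevelQuantizer Δ (1 / √10) (3 / √10) := rfl
  have hsqrt : √(2 * v / π) = 2 * √(v / (2 * π)) := by
    rw [show (2 * v / π : ℝ) = 2 ^ 2 * (v / (2 * π)) by field_simp,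
      sqrt_mul (by positivity), sqrt_sq zero_le_two]
  have hgain : ∫ w, g w * w ∂μ =
      2 / √10 * √(v / (2 * π)) * (1 + 2 * exp (-Δ ^ 2 / (2 * v))) := by
    rw [hg, integral_twoLevelQuantizer_mul_gaussianReal _ _ _ hv.ne' hΔ.le, hsqrt]
    ring
  refine ⟨hgain, fun hP ↦ ?_⟩
  have h10 : √10 ^ 2 = 10 := sq_sqrt (by norm_num)
  have hpower : ∫ w, g w ^ 2 ∂μ = 1 / 2 := by
    rw [hg, integral_twoLevelQuantizer_sq_gaussianReal _ _ _ hv.ne', measureReal_def, hP,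
      div_pow, div_pow, h10]
    norm_num
  rw [hgain, hpower, integral_sq_gaussianReal, mul_pow, mul_pow, div_pow, h10,
    sq_sqrt (by positivity)]
  field_simp
  ring
end

section
/- Let Z be a standard Gaussian random variable. Then lim_{λ→∞} ( λ − ∫_ℝ (1/√(2π))·e^{−z²/2} · ln cosh(λ + √λ·z) dz ) = ln 2. -/
open MeasureTheory Real Filter

noncomputable def gpdf (z : ℝ) : ℝ := (1 / Real.sqrt (2 * Real.pi)) * Real.exp (-z ^ 2 / 2)

lemma gpdf_nonneg (z : ℝ) : 0 ≤ gpdf z := by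
  unfold gpdf; positivity

lemma gpdf_cont : Continuous gpdf := by
  unfold gpdf; continuity

lemma exp_form (z : ℝ) : Real.exp (-z ^ 2 / 2) = Real.exp (-(1/2) * z ^ 2) := by
  ring_nf

lemma gpdf_integrable : Integrable gpdf := by
  unfold gpdf
  simp_rw [exp_form]
  exact (integrable_exp_neg_mul_sq (by norm_num : (0:ℝ) < 1/2)).const_mul _

lemma mul_gpdf_integrable : Integrable (fun z => z * gpdf z) := by
  unfold gpdf
  simp_rw [exp_form, show ∀ z : ℝ, z * ((1 / Real.sqrt (2 * Real.pi)) * Real.exp (-(1/2) * z ^ 2))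
    = (1 / Real.sqrt (2 * Real.pi)) * (z * Real.exp (-(1/2) * z ^ 2)) by intro z; ring]
  exact (integrable_mul_exp_neg_mul_sq (by norm_num : (0:ℝ) < 1/2)).const_mul _

lemma sq_mul_gpdf_integrable : Integrable (fun z => z ^ 2 * gpdf z) := by
  unfold gpdf
  have h := integrable_rpow_mul_exp_neg_mul_sq (by norm_num : (0:ℝ) < 1/2)
    (by norm_num : (-1:ℝ) < 2)
  simp_rw [Real.rpow_two] at h
  simp_rw [exp_form, show ∀ z : ℝ, z ^ 2 * ((1 / Real.sqrt (2 * Real.pi)) * Real.exp (-(1/2) * z ^ 2))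
    = (1 / Real.sqrt (2 * Real.pi)) * (z ^ 2 * Real.exp (-(1/2) * z ^ 2)) by intro z; ring]
  exact h.const_mul _

lemma gpdf_integral : ∫ z : ℝ, gpdf z = 1 := by
  unfold gpdf
  simp_rw [exp_form]
  rw [integral_const_mul, integral_gaussian]
  have h2π : (0:ℝ) < 2 * Real.pi := by positivity
  rw [show Real.pi / (1/2) = 2 * Real.pi by ring]
  field_simp

lemma comp_neg_integral (f : ℝ → ℝ) : ∫ z : ℝ, f (-z) = ∫ z : ℝ, f z := by
  have A : MeasurableEmbedding fun x : ℝ => -x :=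
    (Homeomorph.neg ℝ).isClosedEmbedding.measurableEmbedding
  have := A.integral_map (μ := volume) f
  rw [Measure.map_neg_eq_self (volume : Measure ℝ)] at this
  simpa [Function.comp] using this.symm

lemma gpdf_mul_integral : ∫ z : ℝ, z * gpdf z = 0 := by
  have h := comp_neg_integral (fun z => z * gpdf z)
  have hodd : ∀ z : ℝ, (-z) * gpdf (-z) = -(z * gpdf z) := by
    intro z; unfold gpdf; rw [neg_sq]; ring
  simp_rw [hodd] at h
  rw [integral_neg] at h
  linarith

lemma log_cosh_eq (x : ℝ) :
    Real.log (Real.cosh x) = x - Real.log 2 + Real.log (1 + Real.exp (-(2*x))) := by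
  have he : Real.exp x * Real.exp (-(2*x)) = Real.exp (-x) := by
    rw [← Real.exp_add]; ring_nf
  have h1 : Real.cosh x = Real.exp x * (1 + Real.exp (-(2*x))) / 2 := by
    rw [Real.cosh_eq, ← he]; ring
  rw [h1, Real.log_div (by positivity) (by norm_num),
    Real.log_mul (Real.exp_pos x).ne' (by positivity), Real.log_exp]
  ring

lemma g_bound (x : ℝ) :
    |Real.log 2 - Real.log (1 + Real.exp (-(2*x)))| ≤ Real.log 2 + 2 * max (-x) 0 := by
  have ht : (0:ℝ) < Real.exp (-(2*x)) := Real.exp_pos _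
  have hl2 : (0:ℝ) ≤ Real.log 2 := Real.log_nonneg (by norm_num)
  have hpos : 0 ≤ Real.log (1 + Real.exp (-(2*x))) :=
    Real.log_nonneg (by linarith)
  have hub : Real.log (1 + Real.exp (-(2*x))) ≤ Real.log 2 + 2 * max (-x) 0 := by
    have h1 : Real.exp (-(2*x)) ≤ Real.exp (2 * max (-x) 0) := by
      apply Real.exp_le_exp.2
      have := le_max_left (-x) (0:ℝ)
      linarith
    have h2 : (1:ℝ) ≤ Real.exp (2 * max (-x) 0) := by
      rw [Real.one_le_exp_iff]
      positivity
    calc Real.log (1 + Real.exp (-(2*x)))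
        ≤ Real.log (2 * Real.exp (2 * max (-x) 0)) := by
          apply Real.log_le_log (by linarith)
          linarith
      _ = Real.log 2 + 2 * max (-x) 0 := by
          rw [Real.log_mul (by norm_num) (Real.exp_pos _).ne', Real.log_exp]
  rw [abs_le]
  constructor <;> nlinarith [le_max_right (-x) (0:ℝ)]

/-- With `Z` standard Gaussian,
`lim_{λ→∞} ( λ − ∫_ℝ (1/√(2π)) e^{−z²/2} ln cosh(λ + √λ·z) dz ) = ln 2`. -/
theorem stmt_12 :
    Filter.Tendsto
      (fun lam : ℝ => lam -
        ∫ z : ℝ, (1 / Real.sqrt (2 * Real.pi)) * Real.exp (-z ^ 2 / 2) *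
          Real.log (Real.cosh (lam + Real.sqrt lam * z)))
      Filter.atTop (nhds (Real.log 2)) := by
  -- the "centered" integrand
  set G : ℝ → ℝ → ℝ := fun lam z =>
    gpdf z * (Real.log 2 - Real.log (1 + Real.exp (-(2 * (lam + Real.sqrt lam * z))))) with hG
  have hbound : ∀ lam : ℝ, 1 ≤ lam → ∀ z : ℝ,
      ‖G lam z‖ ≤ gpdf z * (Real.log 2 + 2 * z ^ 2) := by
    intro lam hlam z
    rw [hG]
    simp only [norm_mul, Real.norm_eq_abs, abs_of_nonneg (gpdf_nonneg z)]
    apply mul_le_mul_of_nonneg_left _ (gpdf_nonneg z)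
    refine (g_bound _).trans ?_
    have hmax : max (-(lam + Real.sqrt lam * z)) 0 ≤ z ^ 2 := by
      rcases le_or_gt (|z|) (Real.sqrt lam) with h | h
      · have : Real.sqrt lam * |z| ≤ Real.sqrt lam * Real.sqrt lam :=
          mul_le_mul_of_nonneg_left h (Real.sqrt_nonneg lam)
        rw [Real.mul_self_sqrt (by linarith)] at this
        have hz : -(Real.sqrt lam * z) ≤ Real.sqrt lam * |z| := by
          rw [← mul_neg]
          exact mul_le_mul_of_nonneg_left (neg_le_abs z) (Real.sqrt_nonneg lam)
        have := sq_nonneg z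
        apply max_le _ (by positivity)
        nlinarith
      · have hz : -(Real.sqrt lam * z) ≤ Real.sqrt lam * |z| := by
          rw [← mul_neg]
          exact mul_le_mul_of_nonneg_left (neg_le_abs z) (Real.sqrt_nonneg lam)
        have h2 : Real.sqrt lam * |z| ≤ |z| * |z| :=
          mul_le_mul_of_nonneg_right h.le (abs_nonneg z)
        rw [← sq_abs]
        apply max_le _ (by positivity)
        nlinarith
    linarith
  -- integrability of bound
  have hbint : Integrable (fun z : ℝ => gpdf z * (Real.log 2 + 2 * z ^ 2)) := by
    have : (fun z : ℝ => gpdf z * (Real.log 2 + 2 * z ^ 2))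
        = fun z => Real.log 2 * gpdf z + 2 * (z ^ 2 * gpdf z) := by
      funext z; ring
    rw [this]
    exact ((gpdf_integrable.const_mul _).add ((sq_mul_gpdf_integrable).const_mul _))
  -- G lam is integrable for lam ≥ 1
  have hGmeas : ∀ lam : ℝ, AEStronglyMeasurable (G lam) volume := by
    intro lam
    have hc : Continuous fun z : ℝ => 1 + Real.exp (-(2 * (lam + Real.sqrt lam * z))) := by
      continuity
    have hne : ∀ z : ℝ, 1 + Real.exp (-(2 * (lam + Real.sqrt lam * z))) ≠ 0 := by
      intro z
      have := Real.exp_pos (-(2 * (lam + Real.sqrt lam * z)))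
      positivity
    exact (gpdf_cont.mul (continuous_const.sub (hc.log hne))).aestronglyMeasurable
  have hGint : ∀ lam : ℝ, 1 ≤ lam → Integrable (G lam) := by
    intro lam hlam
    exact Integrable.mono' hbint (hGmeas lam) (Filter.Eventually.of_forall (hbound lam hlam))
  -- the dominated convergence tendsto for ∫ G lam
  have hlim : Tendsto (fun lam => ∫ z : ℝ, G lam z) atTop (nhds (Real.log 2)) := by
    have key : Tendsto (fun lam => ∫ z : ℝ, G lam z) atTop
        (nhds (∫ z : ℝ, gpdf z * Real.log 2)) := by
      apply tendsto_integral_filter_of_dominated_convergence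
        (fun z => gpdf z * (Real.log 2 + 2 * z ^ 2))
      · exact Filter.Eventually.of_forall (fun lam => hGmeas lam)
      · filter_upwards [Filter.eventually_ge_atTop (1:ℝ)] with lam hlam
        exact Filter.Eventually.of_forall (hbound lam hlam)
      · exact hbint
      · apply Filter.Eventually.of_forall
        intro z
        have harg : Tendsto (fun lam : ℝ => lam + Real.sqrt lam * z) atTop atTop := by
          have hdiv : Tendsto (fun lam : ℝ => lam / 2) atTop atTop :=
            Filter.tendsto_id.atTop_div_const (by norm_num)
          apply tendsto_atTop_mono' atTop _ hdiv
          filter_upwards [Filter.eventually_ge_atTop ((2 * |z|) ^ 2),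
              Filter.eventually_ge_atTop (0:ℝ)] with lam h1 h0
          have hs : 2 * |z| ≤ Real.sqrt lam := by
            have := Real.sqrt_le_sqrt h1
            rwa [Real.sqrt_sq (by positivity)] at this
          have hz : -(Real.sqrt lam * z) ≤ Real.sqrt lam * |z| := by
            rw [← mul_neg]
            exact mul_le_mul_of_nonneg_left (neg_le_abs z) (Real.sqrt_nonneg lam)
          have hsq : Real.sqrt lam * Real.sqrt lam = lam := Real.mul_self_sqrt h0
          nlinarith [abs_nonneg z, Real.sqrt_nonneg lam]
        have hexp : Tendsto (fun lam : ℝ =>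
            Real.log (1 + Real.exp (-(2 * (lam + Real.sqrt lam * z))))) atTop (nhds 0) := by
          have h1 : Tendsto (fun lam : ℝ => Real.exp (-(2 * (lam + Real.sqrt lam * z)))) atTop
              (nhds 0) := by
            apply Real.tendsto_exp_atBot.comp
            apply Filter.tendsto_neg_atBot_iff.mpr
            exact harg.const_mul_atTop (by norm_num)
          have h2 : Tendsto (fun lam : ℝ => 1 + Real.exp (-(2 * (lam + Real.sqrt lam * z))))
              atTop (nhds 1) := by
            simpa using (tendsto_const_nhds (x := (1:ℝ))).add h1
          have h3 := h2.log (by norm_num)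
          simpa using h3
        have : Tendsto (fun lam => G lam z) atTop (nhds (gpdf z * (Real.log 2 - 0))) := by
          apply Tendsto.const_mul
          exact (tendsto_const_nhds).sub hexp
        simpa using this
    have : (∫ z : ℝ, gpdf z * Real.log 2) = Real.log 2 := by
      simp_rw [mul_comm (gpdf _) (Real.log 2)]
      rw [integral_const_mul, gpdf_integral, mul_one]
    rwa [this] at key
  -- eventual equality
  apply hlim.congr'
  filter_upwards [Filter.eventually_ge_atTop (1:ℝ)] with lam hlam
  have h1 : Integrable (fun z : ℝ => gpdf z * (lam + Real.sqrt lam * z)) := by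
    have : (fun z : ℝ => gpdf z * (lam + Real.sqrt lam * z))
        = fun z => lam * gpdf z + Real.sqrt lam * (z * gpdf z) := by
      funext z; ring
    rw [this]
    exact (gpdf_integrable.const_mul _).add (mul_gpdf_integrable.const_mul _)
  have heq : ∀ z : ℝ, G lam z = gpdf z * (lam + Real.sqrt lam * z)
      - gpdf z * Real.log (Real.cosh (lam + Real.sqrt lam * z)) := by
    intro z
    rw [hG]
    simp only
    rw [log_cosh_eq (lam + Real.sqrt lam * z)]
    ring
  have h2 : Integrable (fun z : ℝ => gpdf z * Real.log (Real.cosh (lam + Real.sqrt lam * z))) := by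
    have := (h1.sub (hGint lam hlam))
    apply this.congr
    apply Filter.Eventually.of_forall
    intro z
    simp only [Pi.sub_apply]
    rw [heq z]
    ring
  calc (∫ z : ℝ, G lam z)
      = (∫ z : ℝ, gpdf z * (lam + Real.sqrt lam * z))
        - ∫ z : ℝ, gpdf z * Real.log (Real.cosh (lam + Real.sqrt lam * z)) := by
        rw [← integral_sub h1 h2]
        exact integral_congr_ae (Filter.Eventually.of_forall heq)
    _ = lam - ∫ z : ℝ, (1 / Real.sqrt (2 * Real.pi)) * Real.exp (-z ^ 2 / 2) *
          Real.log (Real.cosh (lam + Real.sqrt lam * z)) := by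
        congr 1
        · have : (fun z : ℝ => gpdf z * (lam + Real.sqrt lam * z))
              = fun z => lam * gpdf z + Real.sqrt lam * (z * gpdf z) := by
            funext z; ring
          rw [this, integral_add (gpdf_integrable.const_mul _) (mul_gpdf_integrable.const_mul _),
            integral_const_mul, integral_const_mul, gpdf_integral, gpdf_mul_integral]
          ring
end

section
/- Let Z be a standard Gaussian random variable. Then lim_{λ→0⁺} (1/λ)·( λ − ∫_ℝ (1/√(2π))·e^{−z²/2} · ln cosh(λ + √λ·z) dz ) = 1/2. -/
/-!
Write `log (cosh y) = y² / 2 - R y` with `0 ≤ R y ≤ min (y² / 2) (y⁴ / 4)`. For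
`Y = λ + √λ Z` with `Z` centred of unit variance, `E[Y²] = λ² + λ`, so the quantity equals
`1/2 - λ/2 + E[R Y] / λ`. Since `Y = √λ (√λ + Z)`, the ratio `R Y / λ` is dominated by `1 + Z²`
for `λ ≤ 1` and is at most `λ (√λ + Z)⁴ / 4 → 0`, so the last term vanishes by dominated
convergence.
-/

open Real MeasureTheory ProbabilityTheory Filter Topology

namespace Real

lemma log_cosh_le_sq_div_two (x : ℝ) : log (cosh x) ≤ x ^ 2 / 2 :=
  (log_le_log (cosh_pos x) (cosh_le_exp_half_sq x)).trans_eq (log_exp _)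

lemma one_add_sq_div_two_le_cosh (x : ℝ) : 1 + x ^ 2 / 2 ≤ cosh x := by
  have h := sum_le_hasSum (Finset.range 2)
    (fun i _ => div_nonneg (by rw [pow_mul]; positivity) (by positivity)) (hasSum_cosh x)
  simpa [Finset.sum_range_succ, Nat.factorial] using h

lemma sub_sq_le_log_one_add {u : ℝ} (hu : 0 ≤ u) : u - u ^ 2 ≤ log (1 + u) := by
  have hpos : 0 < 1 + u := by linarith
  calc u - u ^ 2 ≤ 1 - (1 + u)⁻¹ := by
        rw [sub_le_sub_iff, ← sub_nonneg]
        field_simp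
        nlinarith [pow_nonneg hu 3]
    _ ≤ log (1 + u) := one_sub_inv_le_log_of_pos hpos

lemma sq_div_two_sub_pow_four_div_four_le_log_cosh (x : ℝ) :
    x ^ 2 / 2 - x ^ 4 / 4 ≤ log (cosh x) :=
  calc x ^ 2 / 2 - x ^ 4 / 4 = x ^ 2 / 2 - (x ^ 2 / 2) ^ 2 := by ring
    _ ≤ log (1 + x ^ 2 / 2) := sub_sq_le_log_one_add (by positivity)
    _ ≤ log (cosh x) := log_le_log (by positivity) (one_add_sq_div_two_le_cosh x)

end Real

noncomputable def logCoshRemainder (y : ℝ) : ℝ := y ^ 2 / 2 - log (cosh y)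

@[fun_prop]
lemma continuous_logCoshRemainder : Continuous logCoshRemainder := by
  unfold logCoshRemainder
  exact (continuous_pow 2).div_const 2 |>.sub <|
    continuous_cosh.log fun y => (cosh_pos y).ne'

lemma logCoshRemainder_nonneg (y : ℝ) : 0 ≤ logCoshRemainder y :=
  sub_nonneg.2 (log_cosh_le_sq_div_two y)

lemma logCoshRemainder_le_sq_div_two (y : ℝ) : logCoshRemainder y ≤ y ^ 2 / 2 :=
  sub_le_self _ (log_nonneg (one_le_cosh y))

lemma logCoshRemainder_le_pow_four_div_four (y : ℝ) : logCoshRemainder y ≤ y ^ 4 / 4 := by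
  unfold logCoshRemainder
  linarith [sq_div_two_sub_pow_four_div_four_le_log_cosh y]

lemma add_sqrt_mul_sq {t : ℝ} (ht : 0 ≤ t) (x : ℝ) : (t + √t * x) ^ 2 = t * (√t + x) ^ 2 := by
  rw [show t + √t * x = √t * (√t + x) by rw [mul_add, mul_self_sqrt ht], mul_pow, sq_sqrt ht]

lemma logCoshRemainder_add_sqrt_mul_div_le_sq {t : ℝ} (ht : 0 < t) (x : ℝ) :
    logCoshRemainder (t + √t * x) / t ≤ (√t + x) ^ 2 / 2 := by
  rw [div_le_iff₀ ht]
  linarith [logCoshRemainder_le_sq_div_two (t + √t * x), add_sqrt_mul_sq ht.le x]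

lemma logCoshRemainder_add_sqrt_mul_div_le_pow_four {t : ℝ} (ht : 0 < t) (x : ℝ) :
    logCoshRemainder (t + √t * x) / t ≤ t * (√t + x) ^ 4 / 4 := by
  rw [div_le_iff₀ ht]
  have h4 : (t + √t * x) ^ 4 = t ^ 2 * (√t + x) ^ 4 := by
    rw [show 4 = 2 * 2 from rfl, pow_mul, add_sqrt_mul_sq ht.le, mul_pow, ← pow_mul]
  linarith [logCoshRemainder_le_pow_four_div_four (t + √t * x)]

lemma tendsto_integral_logCoshRemainder_div {μ : Measure ℝ} [IsFiniteMeasure μ]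
    (h2 : Integrable (fun x => x ^ 2) μ) :
    Tendsto (fun t : ℝ => ∫ x, logCoshRemainder (t + √t * x) / t ∂μ) (𝓝[>] 0) (𝓝 0) := by
  have hsmall : ∀ᶠ t in 𝓝[>] (0 : ℝ), t ∈ Set.Ioc 0 1 := Ioc_mem_nhdsGT zero_lt_one
  suffices Tendsto (fun t : ℝ => ∫ x, logCoshRemainder (t + √t * x) / t ∂μ) (𝓝[>] 0)
      (𝓝 (∫ _, 0 ∂μ)) by rwa [integral_zero] at this
  refine tendsto_integral_filter_of_dominated_convergence (fun x => 1 + x ^ 2) ?_ ?_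
    ((integrable_const 1).add h2) (ae_of_all _ fun x => ?_)
  · exact Eventually.of_forall fun t => by fun_prop
  · filter_upwards [hsmall] with t ⟨ht, ht1⟩
    refine ae_of_all _ fun x => ?_
    rw [norm_of_nonneg (div_nonneg (logCoshRemainder_nonneg _) ht.le)]
    nlinarith [logCoshRemainder_add_sqrt_mul_div_le_sq ht x, sq_sqrt ht.le, sq_nonneg (√t - x)]
  · have hcont : Tendsto (fun t : ℝ => t * (√t + x) ^ 4 / 4) (𝓝[>] 0) (𝓝 0) := by
      have : Continuous (fun t : ℝ => t * (√t + x) ^ 4 / 4) := by fun_prop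
      simpa using (this.tendsto 0).mono_left nhdsWithin_le_nhds
    refine tendsto_of_tendsto_of_tendsto_of_le_of_le' tendsto_const_nhds hcont ?_ ?_
    · filter_upwards [hsmall] with t ⟨ht, _⟩ using div_nonneg (logCoshRemainder_nonneg _) ht.le
    · filter_upwards [hsmall] with t ⟨ht, _⟩
      exact logCoshRemainder_add_sqrt_mul_div_le_pow_four ht x

section UnitVariance

variable {μ : Measure ℝ} [IsProbabilityMeasure μ]

lemma integrable_add_mul_sq (h : MemLp id 2 μ) (a b : ℝ) :
    Integrable (fun x => (a + b * x) ^ 2) μ :=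
  ((memLp_const a).add (h.const_mul b)).integrable_sq

-- `Var` is `0` off `L²`, so unit variance forces square integrability.
lemma memLp_id_two_of_variance_eq_one (hvar : Var[id; μ] = 1) : MemLp id 2 μ :=
  memLp_two_of_variance_ne_zero aestronglyMeasurable_id (by rw [hvar]; exact one_ne_zero)

lemma integral_add_mul_sq (hmean : ∫ x, x ∂μ = 0) (hvar : Var[id; μ] = 1) (a b : ℝ) :
    ∫ x, (a + b * x) ^ 2 ∂μ = a ^ 2 + b ^ 2 := by
  have hL2 := memLp_id_two_of_variance_eq_one hvar
  have hsq : ∫ x, x ^ 2 ∂μ = 1 := by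
    rw [← hvar, variance_of_integral_eq_zero aemeasurable_id hmean]; rfl
  have h1 : Integrable (fun x => x) μ := hL2.integrable one_le_two
  have h2 : Integrable (fun x => x ^ 2) μ := hL2.integrable_sq
  simp_rw [add_sq, mul_pow]
  have hlin : Integrable (fun x => a ^ 2 + 2 * a * (b * x)) μ :=
    (integrable_const _).add ((h1.const_mul b).const_mul _)
  rw [integral_add hlin (h2.const_mul _),
    integral_add (integrable_const _) ((h1.const_mul b).const_mul _),
    integral_const_mul, integral_const_mul, integral_const_mul, hmean, hsq]
  simp

theorem tendsto_inv_mul_sub_integral_log_cosh (hmean : ∫ x, x ∂μ = 0) (hvar : Var[id; μ] = 1) :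
    Tendsto (fun t : ℝ => (1 / t) * (t - ∫ x, log (cosh (t + √t * x)) ∂μ)) (𝓝[>] 0)
      (𝓝 (1 / 2)) := by
  have hL2 := memLp_id_two_of_variance_eq_one hvar
  have hsplit : ∀ t : ℝ, 0 < t → (1 / t) * (t - ∫ x, log (cosh (t + √t * x)) ∂μ) =
      1 / 2 - t / 2 + ∫ x, logCoshRemainder (t + √t * x) / t ∂μ := fun t ht => by
    have hsq := integrable_add_mul_sq hL2 t √t
    have hrem : Integrable (fun x => logCoshRemainder (t + √t * x)) μ :=
      (hsq.div_const 2).mono' (by fun_prop) (ae_of_all _ fun x => by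
        rw [norm_of_nonneg (logCoshRemainder_nonneg _)]
        exact logCoshRemainder_le_sq_div_two _)
    have hlog : ∫ x, log (cosh (t + √t * x)) ∂μ =
        (t ^ 2 + t) / 2 - ∫ x, logCoshRemainder (t + √t * x) ∂μ := by
      have hR : ∀ y, log (cosh y) = y ^ 2 / 2 - logCoshRemainder y := fun y =>
        (sub_sub_cancel _ _).symm
      simp_rw [hR]
      rw [integral_sub (hsq.div_const 2) hrem, integral_div, integral_add_mul_sq hmean hvar,
        sq_sqrt ht.le]
    rw [hlog, integral_div]
    field_simp
    ring
  have hlin : Tendsto (fun t : ℝ => 1 / 2 - t / 2) (𝓝[>] 0) (𝓝 (1 / 2)) := by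
    exact tendsto_nhdsWithin_of_tendsto_nhds
      ((continuous_const.sub (continuous_id.div_const 2)).tendsto' 0 _ (by norm_num))
  have hlim := hlin.add (tendsto_integral_logCoshRemainder_div hL2.integrable_sq)
  rw [add_zero] at hlim
  exact hlim.congr' (eventually_nhdsWithin_of_forall fun t ht => (hsplit t ht).symm)

end UnitVariance

lemma integral_gaussianReal_zero_one (f : ℝ → ℝ) :
    ∫ z, f z ∂gaussianReal 0 1 = ∫ z, (1 / √(2 * π)) * exp (-z ^ 2 / 2) * f z := by
  rw [integral_gaussianReal_eq_integral_smul one_ne_zero]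
  simp [gaussianPDFReal]

/-- With `Z` standard Gaussian,
`lim_{λ→0⁺} (1/λ)·( λ − ∫_ℝ (1/√(2π)) e^{−z²/2} ln cosh(λ + √λ·z) dz ) = 1/2`. -/
theorem stmt_13 :
    Filter.Tendsto
      (fun lam : ℝ => (1 / lam) * (lam -
        ∫ z : ℝ, (1 / Real.sqrt (2 * Real.pi)) * Real.exp (-z ^ 2 / 2) *
          Real.log (Real.cosh (lam + Real.sqrt lam * z))))
      (nhdsWithin 0 (Set.Ioi 0)) (nhds (1 / 2)) := by
  simp_rw [← integral_gaussianReal_zero_one]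
  exact tendsto_inv_mul_sub_integral_log_cosh integral_id_gaussianReal variance_id_gaussianReal
end
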